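/- arXiv:2509.02393 — 2 statements merged into one kernel-verified Lean document; each statement's English description precedes it below -/
import Mathlib

section
/- Let M = (P, a) be a substochastic DTMC on finite state space S and let S₁ ⊆ S. Define the path-abstraction function P_{S₁}^a : S⁺ → [0,∞] by: P_{S₁}^a(x) = 1 if |x| = 1; P_{S₁}^a(x) = 0 if |x| ≥ 2 and some letter of x lies in (S₁)₀^M := {s ∈ S₁∖{a} | P((S∖S₁)s) = 0}; and P_{S₁}^a(x) = P(x + S₁) otherwise. Then P_{S₁}^a is itself a substochastic transition probability function, i.e., P_{S₁}^a ∈ 𝒯(S): it takes values in [0,1], satisfies Σ_{t∈S} P_{S₁}^a(st) ≤ 1 for all s ∈ S, and P_{S₁}^a(xsy) = P_{S₁}^a(xs)·P_{S₁}^a(sy). -/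
open scoped ENNReal

namespace PA

variable {α : Type*}

/-- Block contraction auxiliary: `prev` records whether the previous letter was in `K`
(i.e., we are inside a `K`-block whose first letter was already kept). -/
def contractAux [DecidableEq α] (K : Finset α) : Bool → List α → List α
  | _, [] => []
  | prev, a :: x =>
    if a ∈ K then
      (if prev then contractAux K true x else a :: contractAux K true x)
    else a :: contractAux K false x

/-- `contract K x` is `x − K`: every maximal nonempty factor of `x` consisting of
letters of `K` is replaced by its first letter. -/
def contract [DecidableEq α] (K : Finset α) (x : List α) : List α :=
  contractAux K false x

/-- `preim K x` is `x + K`, the preimage of `x` under `contract K`. -/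
def preim [DecidableEq α] (K : Finset α) (x : List α) : Set (List α) :=
  {x' | contract K x' = x}

/-- `minPref L` is `L^≤`: the prefix-minimal elements of `L`. -/
def minPref (L : Set (List α)) : Set (List α) :=
  {x ∈ L | ∀ x', x' <+: x → x' ≠ x → x' ∉ L}

/-- Fusion concatenation: for `u` ending in `a` and `v` starting with `a`,
`fuse u v` is `u ++ v` with one copy of the shared letter removed. -/
def fuse (u v : List α) : List α := u ++ v.tail

/-- Elementwise fusion of sets of words. -/
def setFuse (X Y : Set (List α)) : Set (List α) :=
  {z | ∃ u ∈ X, ∃ v ∈ Y, z = fuse u v}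

/-- Probability mass of a set of words: sum of `P` over the prefix-minimal elements. -/
noncomputable def setP (P : List α → ℝ≥0∞) (R : Set (List α)) : ℝ≥0∞ :=
  ∑' x : minPref R, P x.1

/-- `P ∈ 𝒯(S)`: substochastic transition probability function on `S⁺`. -/
def IsTPF [Fintype α] (P : List α → ℝ≥0∞) : Prop :=
  (∀ x, P x ≤ 1) ∧ (∀ s : α, P [s] = 1) ∧
  (∀ s : α, (∑ t : α, P [s, t]) ≤ 1) ∧
  (∀ (x y : List α) (s : α), P (x ++ s :: y) = P (x ++ [s]) * P (s :: y))

/-- `(K)₀^M`: the interior of `K` in the DTMC `(P, a)`: states of `K` other than `a`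
with no incoming transition from outside `K`. -/
def interior [Fintype α] [DecidableEq α] (P : List α → ℝ≥0∞) (a : α) (K : Finset α) :
    Set α :=
  {s | s ∈ K ∧ s ≠ a ∧ (∑ t ∈ Kᶜ, P [t, s]) = 0}

open Classical in
noncomputable def abstr [Fintype α] [DecidableEq α]
    (P : List α → ℝ≥0∞) (a : α) (K : Finset α) : List α → ℝ≥0∞ :=
  fun x =>
    if x.length = 1 then 1
    else if 2 ≤ x.length ∧ ∃ s ∈ x, s ∈ interior P a K then 0
    else setP P (preim K x)

open Classical in
noncomputable def OutSet [Fintype α] (P : List α → ℝ≥0∞) (S₁ : Finset α) : Finset α :=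
  Finset.univ.filter fun t => t ∉ S₁ ∧ 0 < ∑ s ∈ S₁, P [s, t]

open Classical in
noncomputable def USet [Fintype α] (P : List α → ℝ≥0∞) (S₁ : Finset α) : Finset α :=
  Finset.univ.filter fun r => r ∈ S₁ ∧
    0 < setP P {x | ∃ (w : List α) (t : α),
      x = r :: (w ++ [t]) ∧ (∀ c ∈ w, c ∈ S₁) ∧ t ∈ OutSet P S₁}

open Classical in
noncomputable def U1Set [Fintype α] (P : List α → ℝ≥0∞) (S₁ : Finset α) : Finset α :=
  Finset.univ.filter fun r => r ∈ S₁ ∧ 0 < ∑ t ∈ OutSet P S₁, P [r, t]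

end PA

/-!
Write `m(x)` for the prefix-minimal words of `x + S₁`. A word of `m(x s y)` splits uniquely, at the
end of its shortest prefix contracting to `x s`, into a word of `m(x s)` fused at the shared letter
`s` with a word of `m(s y)`; as `P` is multiplicative across `s`, this gives
`P(x s y + S₁) = P(x s + S₁) · P(s y + S₁)`. The words of `⋃ₜ m(s t)`, like those of `m(s y)`, form a
prefix antichain of paths from `s`, and such an antichain has total mass at most `1` (split by the
second letter and induct on the length); this gives the row-sum bound and `P(x + S₁) ≤ 1`.
The value `0` on words through `(S₁)₀` keeps multiplicativity, since such a letter lies in one of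
the two factors.
-/

namespace PA

variable {α : Type*}

section MinPref

theorem prefix_dropLast_of_prefix_of_ne {u w : List α} (h : u <+: w) (hne : u ≠ w) :
    u <+: w.dropLast := by
  obtain ⟨v, rfl⟩ := h
  have hv : v ≠ [] := by rintro rfl; simp at hne
  rw [List.dropLast_append_of_ne_nil hv]
  exact List.prefix_append _ _

theorem isAntichain_minPref (L : Set (List α)) : IsAntichain (· <+: ·) (minPref L) :=
  fun _ hx _ hy hne hpre => hy.2 _ hpre hne hx.1

theorem exists_prefix_mem_minPref {L : Set (List α)} {w : List α} (hw : w ∈ L) :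
    ∃ u, u <+: w ∧ u ∈ minPref L := by
  induction hn : w.length using Nat.strong_induction_on generalizing w with
  | _ n ih =>
    by_cases hmin : w ∈ minPref L
    · exact ⟨w, List.prefix_rfl, hmin⟩
    obtain ⟨u, hu, hne, huL⟩ : ∃ u, u <+: w ∧ u ≠ w ∧ u ∈ L := by
      simpa [minPref, hw] using hmin
    have hlt : u.length < n := hn ▸ lt_of_le_of_ne hu.length_le fun e => hne (hu.eq_of_length e)
    obtain ⟨v, hv, hvmin⟩ := ih _ hlt huL rfl
    exact ⟨v, hv.trans hu, hvmin⟩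

theorem mem_minPref_setOf_eq_iff {β : Type*} {f : List α → List β}
    (hf : ∀ {u v}, u <+: v → f u <+: f v) {y : List β} {w : List α} (hw : w ≠ []) :
    w ∈ minPref {w | f w = y} ↔ f w = y ∧ f w.dropLast ≠ y := by
  refine ⟨fun h => ⟨h.1, h.2 _ (List.dropLast_prefix w) fun e => ?_⟩, fun ⟨h, hd⟩ => ⟨h, ?_⟩⟩
  · have := congrArg List.length e
    have := List.length_pos_iff.2 hw
    simp only [List.length_dropLast] at *
    omega
  · rintro u hu hne (hfu : f u = y)
    have hud := prefix_dropLast_of_prefix_of_ne hu hne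
    have hdw := hf (List.dropLast_prefix w)
    refine hd ((hdw.eq_of_length (le_antisymm hdw.length_le ?_)).trans h)
    exact h ▸ hfu ▸ (hf hud).length_le

end MinPref

section Contract

variable [DecidableEq α] (K : Finset α)

@[simp] theorem contractAux_nil (b : Bool) : contractAux K b [] = [] := by cases b <;> rfl

theorem contractAux_cons (b : Bool) (a : α) (l : List α) :
    contractAux K b (a :: l) =
      (if b = true ∧ a ∈ K then [] else [a]) ++ contractAux K (decide (a ∈ K)) l := by
  by_cases h : a ∈ K <;> cases b <;> simp [contractAux, h]

theorem contractAux_append_cons (b : Bool) (u : List α) (c : α) (v : List α) :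
    contractAux K b (u ++ c :: v) =
      contractAux K b (u ++ [c]) ++ contractAux K (decide (c ∈ K)) v := by
  induction u generalizing b with
  | nil => simp [contractAux_cons]
  | cons a u ih => simp [contractAux_cons, ih]

theorem contractAux_concat (b : Bool) (u : List α) (c : α) :
    contractAux K b (u ++ [c]) = contractAux K b u ∨
      contractAux K b (u ++ [c]) = contractAux K b u ++ [c] := by
  induction u generalizing b with
  | nil => simp only [List.nil_append, contractAux_cons]; split_ifs <;> simp
  | cons a u ih =>
    simp only [List.cons_append, contractAux_cons, List.append_assoc]
    rcases ih (decide (a ∈ K)) with h | h <;> simp [h]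

@[simp] theorem contract_nil : contract K [] = [] := rfl

theorem contract_cons (a : α) (l : List α) :
    contract K (a :: l) = a :: contractAux K (decide (a ∈ K)) l := by
  simp [contract, contractAux_cons]

theorem contract_append_cons (u : List α) (c : α) (v : List α) :
    contract K (u ++ c :: v) = contract K (u ++ [c]) ++ contractAux K (decide (c ∈ K)) v :=
  contractAux_append_cons K false u c v

theorem contract_concat (u : List α) (c : α) :
    contract K (u ++ [c]) = contract K u ∨ contract K (u ++ [c]) = contract K u ++ [c] :=
  contractAux_concat K false u c

theorem contract_prefix {u w : List α} (h : u <+: w) : contract K u <+: contract K w := by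
  obtain ⟨v, rfl⟩ := h
  induction v using List.reverseRecOn with
  | nil => simp
  | append_singleton v c ih =>
    rw [← List.append_assoc]
    rcases contract_concat K (u ++ v) c with h | h <;> rw [h]
    exacts [ih, ih.trans (List.prefix_append _ _)]

theorem exists_prefix_contract_eq {p w : List α} (h : p <+: contract K w) :
    ∃ u, u <+: w ∧ contract K u = p := by
  induction w using List.reverseRecOn with
  | nil => exact ⟨[], List.prefix_rfl, (List.prefix_nil.1 h).symm⟩
  | append_singleton w c ih =>
    by_cases hw : p <+: contract K w
    · obtain ⟨u, hu, rfl⟩ := ih hw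
      exact ⟨u, hu.trans (List.prefix_append _ _), rfl⟩
    · refine ⟨w ++ [c], List.prefix_rfl, ?_⟩
      rcases contract_concat K w c with e | e <;> rw [e] at h ⊢
      · exact absurd h hw
      · exact ((List.prefix_concat_iff.1 h).resolve_right hw).symm

theorem eq_cons_of_contract_eq_cons {w y : List α} {s : α} (h : contract K w = s :: y) :
    ∃ r, w = s :: r := by
  cases w with
  | nil => simp at h
  | cons a r => rw [contract_cons, List.cons.injEq] at h; exact ⟨r, by rw [h.1]⟩

theorem mem_minPref_preim_iff {x w : List α} (hw : w ≠ []) :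
    w ∈ minPref (preim K x) ↔ contract K w = x ∧ contract K w.dropLast ≠ x :=
  mem_minPref_setOf_eq_iff (contract_prefix K) hw

end Contract

section Fusion

variable [DecidableEq α] (K : Finset α)

theorem eq_concat_of_mem_minPref {x w : List α} {s : α} (h : w ∈ minPref (preim K (x ++ [s]))) :
    ∃ u, w = u ++ [s] := by
  have hc : contract K w = x ++ [s] := h.1
  rcases List.eq_nil_or_concat' w with rfl | ⟨u, c, rfl⟩
  · simp at hc
  rcases contract_concat K u c with e | e <;> rw [e] at hc
  · exact absurd hc (h.2 u (List.prefix_append _ _) (by simp))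
  · have := congrArg List.getLast? hc
    simp only [List.getLast?_concat, Option.some.injEq] at this
    exact ⟨u, by rw [this]⟩

theorem contract_append_cons_eq {u x : List α} {s : α} (hu : contract K (u ++ [s]) = x ++ [s])
    (v : List α) : contract K (u ++ s :: v) = x ++ contract K (s :: v) := by
  rw [contract_append_cons, hu, contract_cons, List.append_assoc, List.singleton_append]

theorem fuse_mem_minPref {x y u v : List α} {s : α} (hu : u ∈ minPref (preim K (x ++ [s])))
    (hv : v ∈ minPref (preim K (s :: y))) : fuse u v ∈ minPref (preim K (x ++ s :: y)) := by
  obtain ⟨u, rfl⟩ := eq_concat_of_mem_minPref K hu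
  obtain ⟨v, rfl⟩ := eq_cons_of_contract_eq_cons K hv.1
  have hfuse := contract_append_cons_eq K hu.1
  rcases eq_or_ne v [] with rfl | hv0
  · obtain rfl : y = [] := by simpa [contract_cons] using hv.1.symm
    simpa [fuse] using hu
  rw [mem_minPref_preim_iff K (by simp), List.dropLast_cons_of_ne_nil hv0] at hv
  rw [fuse, List.tail_cons, List.append_assoc, List.singleton_append,
    mem_minPref_preim_iff K (by simp), List.dropLast_append_of_ne_nil (by simp),
    List.dropLast_cons_of_ne_nil hv0, hfuse, hfuse]
  exact ⟨congrArg _ hv.1, fun e => hv.2 (List.append_cancel_left e)⟩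

theorem exists_fuse_eq_of_mem_minPref {x y w : List α} {s : α}
    (hw : w ∈ minPref (preim K (x ++ s :: y))) :
    ∃ u ∈ minPref (preim K (x ++ [s])), ∃ v ∈ minPref (preim K (s :: y)), fuse u v = w := by
  have hpre : x ++ [s] <+: contract K w := hw.1 ▸ ⟨y, by simp⟩
  obtain ⟨w₁, hw₁, hc⟩ := exists_prefix_contract_eq K hpre
  obtain ⟨u, huw, hu⟩ := exists_prefix_mem_minPref (L := preim K (x ++ [s])) hc
  obtain ⟨u, rfl⟩ := eq_concat_of_mem_minPref K hu
  obtain ⟨v, rfl⟩ := huw.trans hw₁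
  have hfuse := contract_append_cons_eq K hu.1
  refine ⟨u ++ [s], hu, s :: v, ?_, by simp [fuse]⟩
  rw [List.append_assoc, List.singleton_append, mem_minPref_preim_iff K (by simp), hfuse] at hw
  rw [mem_minPref_preim_iff K (by simp)]
  refine ⟨List.append_cancel_left hw.1, ?_⟩
  rcases eq_or_ne v [] with rfl | hv0
  · simp
  rw [List.dropLast_cons_of_ne_nil hv0]
  intro e
  apply hw.2
  rw [List.dropLast_append_of_ne_nil (by simp), List.dropLast_cons_of_ne_nil hv0, hfuse, e]

theorem eq_and_eq_of_fuse_eq {x y u₁ u₂ v₁ v₂ : List α} {s : α}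
    (hu₁ : u₁ ∈ minPref (preim K (x ++ [s]))) (hu₂ : u₂ ∈ minPref (preim K (x ++ [s])))
    (hv₁ : v₁ ∈ preim K (s :: y)) (hv₂ : v₂ ∈ preim K (s :: y)) (h : fuse u₁ v₁ = fuse u₂ v₂) :
    u₁ = u₂ ∧ v₁ = v₂ := by
  have h' : u₁ ++ v₁.tail = u₂ ++ v₂.tail := h
  obtain rfl : u₁ = u₂ := by
    rcases List.prefix_or_prefix_of_prefix (List.prefix_append u₁ v₁.tail)
      (h' ▸ List.prefix_append u₂ v₂.tail) with hp | hp
    · exact (isAntichain_minPref _).eq hu₁ hu₂ hp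
    · exact ((isAntichain_minPref _).eq hu₂ hu₁ hp).symm
  obtain ⟨r₁, rfl⟩ := eq_cons_of_contract_eq_cons K hv₁
  obtain ⟨r₂, rfl⟩ := eq_cons_of_contract_eq_cons K hv₂
  exact ⟨rfl, by simpa [fuse] using h⟩

noncomputable def fuseEquiv (x y : List α) (s : α) :
    minPref (preim K (x ++ [s])) × minPref (preim K (s :: y)) ≃ minPref (preim K (x ++ s :: y)) :=
  Equiv.ofBijective (fun p => ⟨fuse p.1 p.2, fuse_mem_minPref K p.1.2 p.2.2⟩) <| by
    refine ⟨fun p q h => ?_, fun w => ?_⟩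
    · obtain ⟨hu, hv⟩ := eq_and_eq_of_fuse_eq K p.1.2 q.1.2 p.2.2.1 q.2.2.1 (congrArg Subtype.val h)
      exact Prod.ext (Subtype.ext hu) (Subtype.ext hv)
    · obtain ⟨u, hu, v, hv, hw⟩ := exists_fuse_eq_of_mem_minPref K w.2
      exact ⟨(⟨u, hu⟩, ⟨v, hv⟩), Subtype.ext hw⟩

theorem setP_preim_append_cons {P : List α → ℝ≥0∞}
    (hP : ∀ (x y : List α) (s : α), P (x ++ s :: y) = P (x ++ [s]) * P (s :: y))
    (x y : List α) (s : α) :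
    setP P (preim K (x ++ s :: y)) = setP P (preim K (x ++ [s])) * setP P (preim K (s :: y)) := by
  have hfuse (p : minPref (preim K (x ++ [s])) × minPref (preim K (s :: y))) :
      P (fuse p.1 p.2) = P p.1 * P p.2 := by
    obtain ⟨⟨u, hu⟩, ⟨v, hv⟩⟩ := p
    obtain ⟨u, rfl⟩ := eq_concat_of_mem_minPref K hu
    obtain ⟨v, rfl⟩ := eq_cons_of_contract_eq_cons K hv.1
    simpa [fuse] using hP u v s
  calc setP P (preim K (x ++ s :: y))
      = ∑' p : minPref (preim K (x ++ [s])) × minPref (preim K (s :: y)), P (fuse p.1 p.2) :=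
        ((fuseEquiv K x y s).tsum_eq (fun w => P w.1)).symm
    _ = ∑' p : minPref (preim K (x ++ [s])) × minPref (preim K (s :: y)), P p.1 * P p.2 :=
        tsum_congr hfuse
    _ = setP P (preim K (x ++ [s])) * setP P (preim K (s :: y)) := by
        rw [ENNReal.tsum_prod', setP, setP, ← ENNReal.tsum_mul_right]
        simp only [ENNReal.tsum_mul_left]

end Fusion

section Antichain

variable [Fintype α] {P : List α → ℝ≥0∞}

theorem IsTPF.sum_le_one_of_isAntichain_of_length_le (hP : IsTPF P) (n : ℕ) {s : α}
    {A : Finset (List α)} (hhead : ∀ z ∈ A, ∃ r, z = s :: r)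
    (hA : IsAntichain (· <+: ·) (A : Set (List α))) (hlen : ∀ z ∈ A, z.length ≤ n) :
    ∑ z ∈ A, P z ≤ 1 := by
  classical
  induction n generalizing s A with
  | zero =>
    have : A = ∅ := Finset.eq_empty_of_forall_notMem fun z hz => by
      obtain ⟨r, rfl⟩ := hhead z hz
      simpa using hlen _ hz
    simp [this]
  | succ n ih =>
    by_cases hs : [s] ∈ A
    · have : A = {[s]} := Finset.eq_singleton_iff_unique_mem.2 ⟨hs, fun z hz => by
        obtain ⟨r, rfl⟩ := hhead z hz
        exact (hA.eq hs hz ⟨r, rfl⟩).symm⟩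
      simpa [this] using hP.1 [s]
    have hfiber (t : α) : ∑ z ∈ A with z.getD 1 s = t, P z ≤ P [s, t] := by
      set B := A.filter (fun z => z.getD 1 s = t)
      have hB : ∀ z ∈ B, z ∈ A ∧ ∃ r, z = s :: t :: r := by
        intro z hz
        obtain ⟨hzA, rfl⟩ := Finset.mem_filter.1 hz
        obtain ⟨r, rfl⟩ := hhead z hzA
        cases r with
        | nil => exact absurd hzA hs
        | cons t r => exact ⟨hzA, r, rfl⟩
      have htail : Set.InjOn List.tail (B : Set (List α)) := by
        intro z hz w hw h
        obtain ⟨-, r, rfl⟩ := hB z hz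
        obtain ⟨-, r', rfl⟩ := hB w hw
        simpa using h
      have hanti : IsAntichain (· <+: ·) (B.image List.tail : Set (List α)) := by
        simp only [Finset.coe_image]
        rintro _ ⟨z, hz, rfl⟩ _ ⟨w, hw, rfl⟩ hne hpre
        obtain ⟨hzA, r, rfl⟩ := hB z hz
        obtain ⟨hwA, r', rfl⟩ := hB w hw
        exact hne (congrArg List.tail (hA.eq hzA hwA ((List.prefix_cons_inj s).2 hpre)))
      calc ∑ z ∈ B, P z = ∑ z ∈ B, P [s, t] * P z.tail := Finset.sum_congr rfl fun z hz => by
            obtain ⟨-, r, rfl⟩ := hB z hz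
            exact hP.2.2.2 [s] r t
        _ = P [s, t] * ∑ w ∈ B.image List.tail, P w := by
            rw [Finset.sum_image htail, Finset.mul_sum]
        _ ≤ P [s, t] * 1 := by
            gcongr
            refine ih (s := t) (fun w hw => ?_) hanti fun w hw => ?_ <;>
              obtain ⟨z, hz, rfl⟩ := Finset.mem_image.1 hw <;>
              obtain ⟨hzA, r, rfl⟩ := hB z hz
            · exact ⟨r, rfl⟩
            · simpa using hlen _ hzA
        _ = P [s, t] := mul_one _
    calc ∑ z ∈ A, P z = ∑ t, ∑ z ∈ A with z.getD 1 s = t, P z :=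
          (Finset.sum_fiberwise A _ P).symm
      _ ≤ ∑ t, P [s, t] := Finset.sum_le_sum fun t _ => hfiber t
      _ ≤ 1 := hP.2.2.1 s

theorem IsTPF.tsum_le_one_of_isAntichain (hP : IsTPF P) {s : α} {A : Set (List α)}
    (hhead : ∀ z ∈ A, ∃ r, z = s :: r) (hA : IsAntichain (· <+: ·) A) :
    ∑' z : A, P z ≤ 1 := by
  rw [ENNReal.tsum_eq_iSup_sum]
  refine iSup_le fun F => ?_
  set F' := F.map (Function.Embedding.subtype (· ∈ A))
  have hF' : (F' : Set (List α)) ⊆ A := by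
    intro z hz
    obtain ⟨w, -, rfl⟩ := Finset.mem_map.1 hz
    exact w.2
  calc ∑ z ∈ F, P z = ∑ z ∈ F', P z := (Finset.sum_map F (Function.Embedding.subtype _) P).symm
    _ ≤ 1 := hP.sum_le_one_of_isAntichain_of_length_le (F'.sup List.length)
      (fun z hz => hhead z (hF' hz)) (hA.subset hF') fun z hz => Finset.le_sup hz

theorem IsTPF.setP_le_one (hP : IsTPF P) {s : α} {L : Set (List α)}
    (hL : ∀ z ∈ L, ∃ r, z = s :: r) : setP P L ≤ 1 :=
  hP.tsum_le_one_of_isAntichain (fun z hz => hL z hz.1) (isAntichain_minPref L)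

end Antichain

section Abstraction

variable [Fintype α] [DecidableEq α] {P : List α → ℝ≥0∞} (K : Finset α)

theorem IsTPF.setP_preim_le_one (hP : IsTPF P) (x : List α) : setP P (preim K x) ≤ 1 := by
  cases x with
  | nil =>
    have : minPref (preim K ([] : List α)) = {[]} := by
      ext z
      refine ⟨fun h => ?_, ?_⟩
      · have hz : contract K z = [] := h.1
        cases z with
        | nil => rfl
        | cons c z => simp [contract_cons] at hz
      · rintro rfl
        exact ⟨rfl, fun u hu hne _ => hne (List.prefix_nil.1 hu)⟩
    rw [setP, this, tsum_singleton]
    exact hP.1 []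
  | cons s y => exact hP.setP_le_one fun z hz => eq_cons_of_contract_eq_cons K hz

theorem IsTPF.sum_setP_preim_pair_le_one (hP : IsTPF P) (s : α) :
    ∑ t, setP P (preim K [s, t]) ≤ 1 := by
  let g : (Σ t, minPref (preim K [s, t])) → List α := fun p => p.2.1
  have hg (p) : contract K (g p) = [s, p.1] := p.2.2.1
  have hprefix {p q} (h : g p <+: g q) : p.1 = q.1 ∧ contract K (g p) = contract K (g q) := by
    have := (contract_prefix K h).eq_of_length (by rw [hg, hg]; rfl)
    exact ⟨by simpa [hg] using this, this⟩
  have hinj : Function.Injective g := fun p q h =>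
    Sigma.subtype_ext (hprefix (h ▸ List.prefix_rfl)).1 h
  have hanti : IsAntichain (· <+: ·) (Set.range g) := by
    rintro _ ⟨p, rfl⟩ _ ⟨q, rfl⟩ hne hpre
    exact q.2.2.2 (g p) hpre hne ((hprefix hpre).2.trans (hg q))
  calc ∑ t, setP P (preim K [s, t]) = ∑' p, P (g p) := by
        rw [ENNReal.tsum_sigma', tsum_fintype]; rfl
    _ = ∑' z : Set.range g, P z := (tsum_range P hinj).symm
    _ ≤ 1 := hP.tsum_le_one_of_isAntichain
      (by rintro _ ⟨p, rfl⟩; exact eq_cons_of_contract_eq_cons K (hg p)) hanti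

variable (P) (a : α)

theorem abstr_of_length_eq_one {x : List α} (h : x.length = 1) : abstr P a K x = 1 := by
  simp [abstr, h]

theorem abstr_eq_zero {x : List α} (h2 : 2 ≤ x.length) (h : ∃ c ∈ x, c ∈ interior P a K) :
    abstr P a K x = 0 := by
  simp [abstr, h2, h, show x.length ≠ 1 by omega]

theorem abstr_eq_setP {x : List α} (h1 : x.length ≠ 1) (h : ∀ c ∈ x, c ∉ interior P a K) :
    abstr P a K x = setP P (preim K x) := by
  have : ¬∃ c ∈ x, c ∈ interior P a K := fun ⟨c, hc, hci⟩ => h c hc hci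
  simp [abstr, h1, this]

theorem abstr_le_setP {x : List α} (h1 : x.length ≠ 1) : abstr P a K x ≤ setP P (preim K x) := by
  unfold abstr
  split_ifs with h
  exacts [absurd h h1, zero_le, le_rfl]

variable {P}

theorem abstr_append_cons
    (hP : ∀ (x y : List α) (s : α), P (x ++ s :: y) = P (x ++ [s]) * P (s :: y))
    (x y : List α) (s : α) :
    abstr P a K (x ++ s :: y) = abstr P a K (x ++ [s]) * abstr P a K (s :: y) := by
  rcases eq_or_ne x [] with rfl | hx
  · simp [abstr_of_length_eq_one]
  rcases eq_or_ne y [] with rfl | hy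
  · simp [abstr_of_length_eq_one]
  have hx1 := List.length_pos_iff.2 hx
  have hy1 := List.length_pos_iff.2 hy
  have hxs : 2 ≤ (x ++ [s]).length := by simp; omega
  have hsy : 2 ≤ (s :: y).length := by simp; omega
  have hxsy : 2 ≤ (x ++ s :: y).length := by simp; omega
  by_cases hint : ∃ c ∈ x ++ s :: y, c ∈ interior P a K
  · rw [abstr_eq_zero P K a hxsy hint]
    obtain ⟨c, hc, hci⟩ := hint
    rcases List.mem_append.1 hc with hc | hc
    · rw [abstr_eq_zero P K a hxs ⟨c, by simp [hc], hci⟩, zero_mul]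
    · rw [abstr_eq_zero P K a hsy ⟨c, hc, hci⟩, mul_zero]
  · have hint' (c : α) (hc : c ∈ x ++ s :: y) : c ∉ interior P a K := fun hci => hint ⟨c, hc, hci⟩
    rw [abstr_eq_setP P K a (by omega) hint',
      abstr_eq_setP P K a (by omega) fun c hc => hint' c (by simp at hc ⊢; tauto),
      abstr_eq_setP P K a (by omega) fun c hc => hint' c (by simp at hc ⊢; tauto),
      setP_preim_append_cons K hP]

theorem IsTPF.abstr_le_one (hP : IsTPF P) (x : List α) : abstr P a K x ≤ 1 := by
  by_cases h : x.length = 1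
  · exact (abstr_of_length_eq_one P K a h).le
  · exact (abstr_le_setP P K a h).trans (hP.setP_preim_le_one K x)

theorem IsTPF.sum_abstr_pair_le_one (hP : IsTPF P) (s : α) : ∑ t, abstr P a K [s, t] ≤ 1 :=
  (Finset.sum_le_sum fun t _ => abstr_le_setP P K a (by simp)).trans
    (hP.sum_setP_preim_pair_le_one K s)

end Abstraction

end PA

open scoped ENNReal in
/-- the path abstraction `P_{S₁}^a` is itself a substochastic
transition probability function. -/
theorem abstr_isTPF {α : Type*} [Fintype α] [DecidableEq α]
    (P : List α → ℝ≥0∞) (hP : PA.IsTPF P) (a : α) (S₁ : Finset α) :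
    PA.IsTPF (PA.abstr P a S₁) :=
  ⟨hP.abstr_le_one S₁ a, fun _ => PA.abstr_of_length_eq_one P S₁ a rfl,
    hP.sum_abstr_pair_le_one S₁ a, PA.abstr_append_cons S₁ a hP.2.2.2⟩
end

section
/- Let M = (P, a) be a substochastic DTMC on finite S and S₁ ⊊ S. Define 𝒪 := {t ∈ S∖S₁ | P(S₁ t) > 0}, 𝒰 := {r ∈ S₁ | P(r S₁* 𝒪) > 0}, and 𝒰₁ := {r ∈ S₁ | P(r𝒪) > 0}. Assume 𝒰 and 𝒪 are nonempty. Then the matrix 1 − P₂(𝒰) (identity minus the 𝒰×𝒰 submatrix of the transition matrix) is invertible, and its inverse is Σ_{i=0}^∞ P₂(𝒰)^i; equivalently, the spectral radius of P₂(𝒰) is strictly less than 1. -/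
open scoped ENNReal

/-!
Let `A = P₂(𝒰)`. It is entrywise nonnegative with row sums at most `1`, and the row sums of `A ^ k`
decrease with `k`. Every `u ∈ 𝒰` starts a positive path through `𝒰` whose last state moves to
`𝒪 ⊆ S ∖ 𝒰` with positive probability, so that state has row sum `< 1`, and the deficit propagates
back along the path: the row of `u` in `A ^ k` sums to less than `1` for `k` the length of the path.
Hence some power `A ^ N` has `ℓ∞`-operator norm `< 1`, the Neumann series `∑ A ^ i` converges, and
it inverts `1 - A`.
-/

theorem summable_pow_of_norm_pow_lt_one {R : Type*} [NormedRing R] [CompleteSpace R] {x : R}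
    {N : ℕ} (h : ‖x ^ N‖ < 1) : Summable (x ^ ·) := by
  nontriviality R
  have : NeZero N := ⟨by
    rintro rfl
    exact (one_le_norm_one R).not_gt (by rwa [pow_zero] at h)⟩
  have hblocks : Summable fun p : ℕ × Fin N => (x ^ N) ^ p.1 * x ^ (p.2 : ℕ) :=
    summable_mul_of_summable_norm (f := fun q => (x ^ N) ^ q) (g := fun r : Fin N => x ^ (r : ℕ))
      (summable_norm_geometric_of_norm_lt_one h) Summable.of_finite
  -- `x ^ (q * N + r) = (x ^ N) ^ q * x ^ r` with `r < N`
  refine (Nat.divModEquiv N).symm.summable_iff.mp ?_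
  convert hblocks using 2 with p
  simp [pow_add, pow_mul, mul_comm]

namespace Matrix

variable {R n : Type*} [Fintype n]

lemma mulVec_mono_of_nonneg [Semiring R] [PartialOrder R] [IsOrderedRing R] {M : Matrix n n R}
    (hM : ∀ i j, 0 ≤ M i j) {x y : n → R} (hxy : x ≤ y) : M *ᵥ x ≤ M *ᵥ y :=
  fun i => Finset.sum_le_sum fun j _ => mul_le_mul_of_nonneg_left (hxy j) (hM i j)

variable [DecidableEq n]

section OrderedSemiring

variable [Semiring R] [PartialOrder R] [IsOrderedRing R] {A : Matrix n n R}

variable (R n) in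
def rowSubstochastic : Submonoid (Matrix n n R) where
  carrier := {M | (∀ i j, 0 ≤ M i j) ∧ M *ᵥ 1 ≤ 1}
  mul_mem' {M N} hM hN :=
    ⟨fun i j => Finset.sum_nonneg fun k _ => mul_nonneg (hM.1 i k) (hN.1 k j), by
      rw [← mulVec_mulVec]
      exact (mulVec_mono_of_nonneg hM.1 hN.2).trans hM.2⟩
  one_mem' := ⟨fun i j => by by_cases h : i = j <;> simp [one_apply, h], by simp⟩

lemma mulVec_one_pow_antitone (hA : A ∈ rowSubstochastic R n) :
    Antitone fun k : ℕ => A ^ k *ᵥ 1 := by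
  intro k m hkm
  obtain ⟨d, rfl⟩ := Nat.exists_eq_add_of_le hkm
  simp only [pow_add, ← mulVec_mulVec]
  exact mulVec_mono_of_nonneg (pow_mem hA k).1 (pow_mem hA d).2

end OrderedSemiring

lemma mul_mulVec_one_apply_lt_one [Semiring R] [PartialOrder R] [IsStrictOrderedRing R]
    {M N : Matrix n n R} (hM : M ∈ rowSubstochastic R n)
    (hN : N ∈ rowSubstochastic R n) {i j : n} (hMij : 0 < M i j) (hNj : (N *ᵥ 1) j < 1) :
    ((M * N) *ᵥ 1) i < 1 :=
  calc ((M * N) *ᵥ 1) i = ∑ k, M i k * (N *ᵥ 1) k := by rw [← mulVec_mulVec]; rfl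
    _ < ∑ k, M i k * 1 :=
      Finset.sum_lt_sum (fun k _ => mul_le_mul_of_nonneg_left (hN.2 k) (hM.1 i k))
        ⟨j, Finset.mem_univ j, mul_lt_mul_of_pos_left hNj hMij⟩
    _ ≤ 1 := hM.2 i

section Real

attribute [local instance] Matrix.linftyOpNormedRing

lemma linfty_opNorm_lt_one_of_mulVec_one_lt_one {M : Matrix n n ℝ} (hM : ∀ i j, 0 ≤ M i j)
    (h : ∀ i, (M *ᵥ 1) i < 1) : ‖M‖ < 1 := by
  rw [linfty_opNorm_def, ← NNReal.coe_one, NNReal.coe_lt_coe, Finset.sup_lt_iff one_pos]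
  intro i _
  rw [← NNReal.coe_lt_coe, NNReal.coe_sum]
  simpa [Real.norm_of_nonneg (hM i _), mulVec, dotProduct] using h i

end Real

theorem summable_pow_of_forall_exists_pow_mulVec_one_lt_one {A : Matrix n n ℝ}
    (hA : A ∈ rowSubstochastic ℝ n) (h : ∀ i, ∃ k, (A ^ k *ᵥ 1) i < 1) : Summable (A ^ ·) := by
  choose k hk using h
  have hnorm := linfty_opNorm_lt_one_of_mulVec_one_lt_one (pow_mem hA (∑ i, k i)).1 fun i =>
    (mulVec_one_pow_antitone hA (Finset.single_le_sum (by simp) (Finset.mem_univ i)) i).trans_lt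
      (hk i)
  -- the `ℓ∞` operator norm induces the product uniformity, so `Matrix` stays complete for it
  have hcomplete : CompleteSpace (Matrix n n ℝ) := inferInstance
  exact @summable_pow_of_norm_pow_lt_one _ Matrix.linftyOpNormedRing hcomplete _ _ hnorm

theorem isUnit_one_sub_and_hasSum_inv_of_summable_pow [CommRing R] [TopologicalSpace R]
    [IsTopologicalRing R] [T2Space R] {A : Matrix n n R} (h : Summable (A ^ ·)) :
    IsUnit (1 - A) ∧ HasSum (A ^ ·) (1 - A)⁻¹ := by
  rw [inv_eq_right_inv h.one_sub_mul_tsum_pow]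
  exact ⟨⟨⟨1 - A, _, h.one_sub_mul_tsum_pow, h.tsum_pow_mul_one_sub⟩, rfl⟩, h.hasSum⟩

end Matrix

namespace PA

variable {α : Type*} [Fintype α] {P : List α → ℝ≥0∞}

lemma IsTPF.apply_append_le (hP : IsTPF P) {x : List α} (hx : x ≠ []) (z : List α) :
    P (x ++ z) ≤ P x := by
  obtain ⟨y, s, rfl⟩ := (List.eq_nil_or_concat x).resolve_left hx
  cases z with
  | nil => simp
  | cons b z =>
    rw [List.concat_eq_append, List.append_assoc, List.singleton_append, hP.2.2.2]
    exact mul_le_of_le_one_right' (hP.1 _)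

lemma IsTPF.apply_cons_cons (hP : IsTPF P) (r s : α) (y : List α) :
    P (r :: s :: y) = P [r, s] * P (s :: y) := by
  simpa using hP.2.2.2 [r] y s

lemma IsTPF.setP_pos_iff (hP : IsTPF P) {L : Set (List α)} (hnil : [] ∉ L) :
    0 < setP P L ↔ ∃ x ∈ L, 0 < P x := by
  -- a shortest positive word of `L` is prefix-minimal, since `P` only decreases along extensions
  constructor
  · intro h
    by_contra! hzero
    exact h.ne' (ENNReal.tsum_eq_zero.2 fun x => nonpos_iff_eq_zero.1 (hzero x.1 x.2.1))
  · rintro ⟨x, hx, hpos⟩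
    induction hlen : x.length using Nat.strong_induction_on generalizing x with
    | _ n ih =>
    by_cases hmin : x ∈ minPref L
    · exact hpos.trans_le (ENNReal.le_tsum (⟨x, hmin⟩ : minPref L))
    · obtain ⟨x', ⟨z, rfl⟩, hne, hx'⟩ : ∃ x', x' <+: x ∧ x' ≠ x ∧ x' ∈ L := by
        simpa [minPref, hx] using hmin
      have hx'nil : x' ≠ [] := by
        rintro rfl
        exact hnil hx'
      have hz : z ≠ [] := by
        rintro rfl
        simp at hne
      refine ih x'.length ?_ x' hx' (hpos.trans_le (hP.apply_append_le hx'nil z)) rfl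
      subst hlen
      simpa [List.length_append] using List.length_pos_iff.2 hz

open Matrix

/-- The paper's `P₂(U)`. -/
noncomputable def stepMatrix (P : List α → ℝ≥0∞) (U : Finset α) : Matrix U U ℝ :=
  Matrix.of fun u v => (P [u.1, v.1]).toReal

lemma stepMatrix_apply_pos (hP : IsTPF P) {U : Finset α} {u v : U} (h : 0 < P [u.1, v.1]) :
    0 < stepMatrix P U u v :=
  ENNReal.toReal_pos h.ne' (ne_top_of_le_ne_top ENNReal.one_ne_top (hP.1 _))

lemma stepMatrix_mulVec_one_apply (hP : IsTPF P) (U : Finset α) (u : U) :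
    (stepMatrix P U *ᵥ 1) u = (∑ v ∈ U, P [u.1, v]).toReal := by
  rw [ENNReal.toReal_sum fun v _ => ne_top_of_le_ne_top ENNReal.one_ne_top (hP.1 _),
    ← Finset.sum_coe_sort U]
  simp [stepMatrix, mulVec, dotProduct]

lemma IsTPF.sum_add_le_one (hP : IsTPF P) {U : Finset α} {t : α} (ht : t ∉ U) (u : α) :
    ∑ v ∈ U, P [u, v] + P [u, t] ≤ 1 := by
  classical
  rw [add_comm, ← Finset.sum_insert ht (f := fun v => P [u, v])]
  exact (Finset.sum_le_sum_of_subset (Finset.subset_univ _)).trans (hP.2.2.1 u)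

lemma stepMatrix_mulVec_one_apply_lt_one (hP : IsTPF P) {U : Finset α} {u : U} {t : α}
    (ht : t ∉ U) (hpos : 0 < P [u.1, t]) : (stepMatrix P U *ᵥ 1) u < 1 := by
  have hle := hP.sum_add_le_one ht u
  have hlt : ∑ v ∈ U, P [u.1, v] < 1 :=
    (ENNReal.lt_add_right (ne_top_of_le_ne_top ENNReal.one_ne_top (le_self_add.trans hle))
      hpos.ne').trans_le hle
  rw [stepMatrix_mulVec_one_apply hP]
  exact ENNReal.toReal_lt_of_lt_ofReal (by rwa [ENNReal.ofReal_one])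

lemma mem_USet_iff (hP : IsTPF P) {S₁ : Finset α} {r : α} :
    r ∈ USet P S₁ ↔ r ∈ S₁ ∧ ∃ (w : List α) (t : α),
      (∀ c ∈ w, c ∈ S₁) ∧ t ∈ OutSet P S₁ ∧ 0 < P (r :: (w ++ [t])) := by
  simp only [USet, Finset.mem_filter, Finset.mem_univ, true_and]
  rw [hP.setP_pos_iff]
  · simp [and_assoc]
  · rintro ⟨w, t, h, -⟩
    exact List.cons_ne_nil _ _ h.symm

lemma notMem_USet_of_mem_OutSet {S₁ : Finset α} {t : α} (ht : t ∈ OutSet P S₁) :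
    t ∉ USet P S₁ := by
  intro htU
  simp only [USet, Finset.mem_filter] at htU
  simp only [OutSet, Finset.mem_filter] at ht
  exact ht.2.1 htU.2.1

variable [DecidableEq α]

lemma stepMatrix_mem_rowSubstochastic (hP : IsTPF P) (U : Finset α) :
    stepMatrix P U ∈ rowSubstochastic ℝ U := by
  refine ⟨fun _ _ => ENNReal.toReal_nonneg, fun u => ?_⟩
  rw [stepMatrix_mulVec_one_apply hP, Pi.one_apply]
  refine ENNReal.toReal_le_of_le_ofReal zero_le_one ?_
  rw [ENNReal.ofReal_one]
  exact (Finset.sum_le_sum_of_subset (Finset.subset_univ _)).trans (hP.2.2.1 u)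

lemma exists_pow_stepMatrix_mulVec_one_lt_one (hP : IsTPF P) (S₁ : Finset α) (u : USet P S₁) :
    ∃ k, (stepMatrix P (USet P S₁) ^ k *ᵥ 1) u < 1 := by
  have hA := stepMatrix_mem_rowSubstochastic hP (USet P S₁)
  obtain ⟨-, w, t, hw, ht, hpos⟩ := (mem_USet_iff hP).1 u.2
  induction w generalizing u with
  | nil =>
    refine ⟨1, ?_⟩
    simpa using stepMatrix_mulVec_one_apply_lt_one hP (notMem_USet_of_mem_OutSet ht)
      (by simpa using hpos)
  | cons s w ih =>
    rw [List.cons_append, hP.apply_cons_cons, ENNReal.mul_pos_iff] at hpos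
    have hw' : ∀ c ∈ w, c ∈ S₁ := fun c hc => hw c (List.mem_cons_of_mem _ hc)
    have hsU : s ∈ USet P S₁ :=
      (mem_USet_iff hP).2 ⟨hw s List.mem_cons_self, w, t, hw', ht, hpos.2⟩
    obtain ⟨k, hk⟩ := ih ⟨s, hsU⟩ hw' hpos.2
    refine ⟨k + 1, ?_⟩
    rw [pow_succ']
    exact mul_mulVec_one_apply_lt_one hA (pow_mem hA k) (stepMatrix_apply_pos hP hpos.1) hk

end PA

open scoped ENNReal in
theorem one_sub_P2U_invertible_general {α : Type*} [Fintype α] [DecidableEq α]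
    (P : List α → ℝ≥0∞) (hP : PA.IsTPF P)
    (S₁ : Finset α) :
    IsUnit (1 - Matrix.of fun u v : {x // x ∈ PA.USet P S₁} => (P [u.1, v.1]).toReal) ∧
    HasSum (fun i : ℕ =>
        (Matrix.of fun u v : {x // x ∈ PA.USet P S₁} => (P [u.1, v.1]).toReal) ^ i)
      (1 - Matrix.of fun u v : {x // x ∈ PA.USet P S₁} => (P [u.1, v.1]).toReal)⁻¹ :=
  Matrix.isUnit_one_sub_and_hasSum_inv_of_summable_pow <|
    Matrix.summable_pow_of_forall_exists_pow_mulVec_one_lt_one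
      (PA.stepMatrix_mem_rowSubstochastic hP _) (PA.exists_pow_stepMatrix_mulVec_one_lt_one hP S₁)

open scoped ENNReal in
/-- `1 − P₂(𝒰)` is invertible with inverse `Σ_{i=0}^∞ P₂(𝒰)^i`. -/
theorem one_sub_P2U_invertible {α : Type*} [Fintype α] [DecidableEq α]
    (P : List α → ℝ≥0∞) (hP : PA.IsTPF P) (a : α)
    (S₁ : Finset α) (hS₁ : S₁ ⊂ Finset.univ)
    (hU : (PA.USet P S₁).Nonempty) (hO : (PA.OutSet P S₁).Nonempty) :
    IsUnit (1 - Matrix.of fun u v : {x // x ∈ PA.USet P S₁} => (P [u.1, v.1]).toReal) ∧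
    HasSum (fun i : ℕ =>
        (Matrix.of fun u v : {x // x ∈ PA.USet P S₁} => (P [u.1, v.1]).toReal) ^ i)
      (1 - Matrix.of fun u v : {x // x ∈ PA.USet P S₁} => (P [u.1, v.1]).toReal)⁻¹ :=
  one_sub_P2U_invertible_general P hP S₁
end
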